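/- arXiv:1509.05815 — 2 statements merged into one kernel-verified Lean document; each statement's English description precedes it below -/
import Mathlib

section
/- Let Δ ⊂ ℝⁿ be an n-dimensional lattice polytope with N = |Δ| lattice points I_1, …, I_N. Let x_1, …, x_M ∈ ℝⁿ be points and m_1, …, m_M positive integers with Σ_i m_i = N − 1. Let A be the (N−1) × N tw-matrix with entries A_{ij} = I_j · x_i and row weights m_i, and let a = (a_1, …, a_N) be the vector of maximal tw-minors of A, viewed as a coefficient vector a_{I_j} = a_j of a tropical polynomial with support Δ. Then V(a) has multiplicity at least m_i at x_i for every i. Moreover, every coefficient vector a' with support Δ such that V(a') has multiplicity at least m_i at x_i for every i satisfies a' = a + c·(1, …, 1) for some c ∈ ℝ if and only if every maximal tw-minor of A is tw-nonsingular. -/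
/-!
Call a partition of the columns other than `j` into blocks of sizes `m i` a hole partition with
hole `j`, so that `a j` is the least cost of one. Exchanging a column `c` of block `i` of an
optimal one with the hole shows `a c + A i c ≤ a j + A i j`; taking for `j` a column where
`a j + A i j` attains its minimum `S i`, block `i` and the hole give `m i + 1` columns attaining
`S i`. The `m`-weighted sum of these `M` augmented partitions, plus one extra row meeting every
column once, is a `(K + 1)`-regular bipartite multigraph; splitting it into perfect assignments
(König) gives `∑ j, a j = ∑ i, m i * S i`. Hence a hole partition is optimal iff each block `i`
consists of columns attaining `S i` ("tight" columns).

Both sides of the equivalence then fail exactly when some proper nonempty set `S` of columns is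
raisable: every row has all of its tight columns in `S` or at least `m i + 1` of them outside.
Adding a small constant to `a` on `S` gives a solution which is not a translate of `a`, and for a
solution `a'` which is not a translate, the columns where `a' - a` is not minimal form a raisable
set. If there is no raisable set, then starting from the hole, each row whose tight columns leave
the current set has its block forced, so tight hole partitions with the same hole coincide.
Conversely, in an optimal hole partition each row whose tight set leaves a raisable `S` can take
a tight column outside `S` from another such row; a cycle of such exchanges yields a second
optimal hole partition.
-/

/-- An ordered partition of the column set `Fin K` into blocks of sizes `m i`. -/
def IsTWPartition {M K : ℕ} (m : Fin M → ℕ) (P : Fin M → Finset (Fin K)) : Prop :=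
  (∀ i, (P i).card = m i) ∧ ∀ j : Fin K, ∃! i, j ∈ P i

/-- The sum `Σ_i Σ_{j ∈ I_i} A_{ij}` associated to an ordered partition. -/
def partSum {M K : ℕ} (A : Fin M → Fin K → ℝ) (P : Fin M → Finset (Fin K)) : ℝ :=
  ∑ i, ∑ j ∈ P i, A i j

/-- The tw-permanent: the minimum of `partSum` over all ordered partitions. -/
noncomputable def twPerm {M K : ℕ} (m : Fin M → ℕ) (A : Fin M → Fin K → ℝ) : ℝ :=
  sInf (partSum A '' {P | IsTWPartition m P})

/-- `A` is tw-singular. -/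
def TWSingular {M K : ℕ} (m : Fin M → ℕ) (A : Fin M → Fin K → ℝ) : Prop :=
  ∃ P Q : Fin M → Finset (Fin K), IsTWPartition m P ∧ IsTWPartition m Q ∧ P ≠ Q ∧
    partSum A P = partSum A Q ∧ ∀ R, IsTWPartition m R → partSum A P ≤ partSum A R

/-- The tw-matrix obtained by deleting column `j`. -/
def minorMatrix {M K : ℕ} (A : Fin M → Fin (K + 1) → ℝ) (j : Fin (K + 1)) :
    Fin M → Fin K → ℝ :=
  fun i k => A i (j.succAbove k)

/-- The inclusion of `ℤⁿ` in `ℝⁿ`. -/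
def toR {n : ℕ} (I : Fin n → ℤ) : Fin n → ℝ := fun k => (I k : ℝ)

/-- `I · x`. -/
def dotIR {n : ℕ} (I : Fin n → ℤ) (x : Fin n → ℝ) : ℝ := ∑ k, (I k : ℝ) * x k

/-- `V(a)` (with coefficients indexed by the lattice points `I j` of `Δ`) has multiplicity
at least `μ` at `x`: the minimum of `a j + I j · x` is attained by at least `μ + 1`
indices. -/
def MultAtLeast {n K : ℕ} (I : Fin (K + 1) → Fin n → ℤ) (a : Fin (K + 1) → ℝ)
    (x : Fin n → ℝ) (μ : ℕ) : Prop :=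
  μ + 1 ≤ {j : Fin (K + 1) | ∀ k, a j + dotIR (I j) x ≤ a k + dotIR (I k) x}.ncard

open Finset

namespace TropicalCramer

section Combinatorics

theorem exists_isTWPartition {M K : ℕ} {m : Fin M → ℕ} (hw : ∑ i, m i = K) :
    ∃ P : Fin M → Finset (Fin K), IsTWPartition m P := by
  subst hw
  let e := (finSigmaFinEquiv (n := m)).toEmbedding
  refine ⟨fun i => univ.map ((Function.Embedding.sigmaMk i).trans e), fun i => by simp,
    fun k => ⟨(finSigmaFinEquiv.symm k).1, ?_, ?_⟩⟩
  · exact mem_map.2 ⟨(finSigmaFinEquiv.symm k).2, mem_univ _, by simp [e]⟩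
  · rintro i hi
    obtain ⟨t, -, rfl⟩ := mem_map.1 hi
    simp [e]

theorem _root_.IsTWPartition.card_filter_mem {M N : ℕ} {μ : Fin M → ℕ}
    {P : Fin M → Finset (Fin N)} (hP : IsTWPartition μ P) (v : Fin N) : #{i | v ∈ P i} = 1 := by
  obtain ⟨i, hi, hu⟩ := hP.2 v
  exact card_eq_one.2 ⟨i, by ext i'; simpa using ⟨hu i', fun h => h ▸ hi⟩⟩

theorem nonempty_periodicPts {α : Type*} [Finite α] [Nonempty α] (f : α → α) :
    (Function.periodicPts f).Nonempty := by
  obtain ⟨p, q, hpq, heq⟩ :=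
    Finite.exists_ne_map_eq_of_infinite fun n => f^[n] (Classical.arbitrary α)
  wlog hlt : p < q generalizing p q
  · exact this q p hpq.symm heq.symm (by omega)
  refine ⟨f^[p] (Classical.arbitrary α), Function.mk_mem_periodicPts (n := q - p) (by omega) ?_⟩
  rw [Function.IsPeriodicPt, Function.IsFixedPt, ← Function.iterate_add_apply,
    Nat.sub_add_cancel hlt.le, heq]

theorem exists_pos_forall_le {α : Type*} [Fintype α] (f : α → ℝ) :
    ∃ s > 0, ∀ x, 0 < f x → s ≤ f x := by
  classical
  by_cases h : ({x | 0 < f x} : Finset α).Nonempty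
  · obtain ⟨x₀, hx₀, hmin⟩ := exists_min_image _ f h
    exact ⟨f x₀, (mem_filter.1 hx₀).2, fun x hx => hmin x (mem_filter.2 ⟨mem_univ _, hx⟩)⟩
  · exact ⟨1, one_pos, fun x hx => absurd ⟨x, mem_filter.2 ⟨mem_univ _, hx⟩⟩ h⟩

variable {ι κ : Type*} [Fintype ι] [DecidableEq ι] [Fintype κ]

theorem sum_eq_sum_fiberwise {β : Type*} [AddCommMonoid β] (σ : κ → ι) (F : ι → κ → β) :
    ∑ k, F (σ k) k = ∑ i, ∑ k with σ k = i, F i k := by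
  rw [← sum_fiberwise univ σ]
  exact sum_congr rfl fun i _ => sum_congr rfl fun k hk => by rw [(mem_filter.1 hk).2]

theorem sum_sum_eq_sum_card_mul {D : ℕ} (σ : Fin D → κ → ι) (F : ι → κ → ℝ) :
    ∑ c, ∑ k, F (σ c k) k = ∑ k, ∑ i, (#{c | σ c k = i} : ℝ) * F i k := by
  rw [sum_comm]
  refine sum_congr rfl fun k _ => ?_
  rw [sum_eq_sum_fiberwise (fun c => σ c k) fun i _ => F i k]
  simp

theorem card_filter_sigma_fst_eq (μ : ι → ℕ) (i : ι) :
    #{x : (i : ι) × Fin (μ i) | x.1 = i} = μ i := by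
  rw [card_filter, Fintype.sum_sigma]
  simp [apply_ite]

variable [DecidableEq κ]

theorem card_le_card_biUnion_of_regular {D : ℕ} (hD : 0 < D) {μ : ι → ℕ} {g : ι → κ → ℕ}
    (hrow : ∀ i, ∑ k, g i k = D * μ i) (hcol : ∀ k, ∑ i, g i k = D)
    (s : Finset ((i : ι) × Fin (μ i))) :
    #s ≤ #(s.biUnion fun x => {k | 0 < g x.1 k}) := by
  set I := s.image Sigma.fst
  set N := I.biUnion fun i => ({k | 0 < g i k} : Finset κ)
  have hN : (s.biUnion fun x => {k | 0 < g x.1 k}) = N := by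
    ext k
    simp only [mem_biUnion, mem_image, mem_filter, mem_univ, true_and, I, N]
    constructor
    · rintro ⟨x, hx, hk⟩
      exact ⟨x.1, ⟨x, hx, rfl⟩, hk⟩
    · rintro ⟨i, ⟨x, hx, rfl⟩, hk⟩
      exact ⟨x, hx, hk⟩
  have hsI : #s ≤ ∑ i ∈ I, μ i :=
    calc #s ≤ #(I.sigma fun i => (univ : Finset (Fin (μ i)))) :=
          card_le_card fun x hx => mem_sigma.2 ⟨mem_image_of_mem _ hx, mem_univ _⟩
      _ = ∑ i ∈ I, μ i := by simp [card_sigma]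
  have hIN : D * ∑ i ∈ I, μ i ≤ D * #N :=
    calc D * ∑ i ∈ I, μ i = ∑ i ∈ I, ∑ k ∈ N, g i k := by
          rw [mul_sum]
          refine sum_congr rfl fun i hi => ?_
          rw [← hrow i]
          refine (sum_subset (subset_univ N) fun k _ hk => ?_).symm
          by_contra hne
          exact hk (mem_biUnion.2 ⟨i, hi, by simpa [Nat.pos_iff_ne_zero] using hne⟩)
      _ = ∑ k ∈ N, ∑ i ∈ I, g i k := sum_comm
      _ ≤ ∑ k ∈ N, ∑ i, g i k := sum_le_sum fun k _ => sum_le_sum_of_subset (subset_univ I)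
      _ = D * #N := by simp [hcol, mul_comm]
  rw [hN]
  exact hsI.trans (Nat.le_of_mul_le_mul_left hIN hD)

/-- Hall's theorem, applied to `μ i` copies of each row `i`. -/
theorem exists_assignment_of_regular {D : ℕ} (hD : 0 < D) (μ : ι → ℕ)
    (hμ : ∑ i, μ i = Fintype.card κ) (g : ι → κ → ℕ) (hrow : ∀ i, ∑ k, g i k = D * μ i)
    (hcol : ∀ k, ∑ i, g i k = D) :
    ∃ τ : κ → ι, (∀ i, #{k | τ k = i} = μ i) ∧ ∀ k, 0 < g (τ k) k := by
  let t : (i : ι) × Fin (μ i) → Finset κ := fun x => {k | 0 < g x.1 k}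
  have hall : ∀ s, #s ≤ #(s.biUnion t) := card_le_card_biUnion_of_regular hD hrow hcol
  obtain ⟨e, he, het⟩ := (all_card_le_biUnion_card_iff_exists_injective t).1 hall
  have hbij : Function.Bijective e :=
    (Fintype.bijective_iff_injective_and_card e).2 ⟨he, by simp [Fintype.card_sigma, hμ]⟩
  let E := Equiv.ofBijective e hbij
  refine ⟨fun k => (E.symm k).1, fun i => ?_, fun k => ?_⟩
  · rw [← card_filter_sigma_fst_eq μ i]
    refine card_nbij' E.symm E (fun k hk => by simpa using hk) (fun x hx => ?_)
      (fun k _ => by simp) (fun x _ => by simp)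
    simp only [coe_filter, mem_univ, true_and] at hx ⊢
    simpa [E] using hx
  · simpa [t, E, Equiv.ofBijective_apply_symm_apply] using het (E.symm k)

/-- König's theorem: a bipartite multigraph in which column `k` has degree `D` and row `i` has
degree `D * μ i` is the union of `D` assignments of the columns to the rows, each giving row `i`
exactly `μ i` columns. -/
theorem exists_decomposition_of_regular (μ : ι → ℕ) (hμ : ∑ i, μ i = Fintype.card κ) :
    ∀ (D : ℕ) (g : ι → κ → ℕ), (∀ i, ∑ k, g i k = D * μ i) → (∀ k, ∑ i, g i k = D) →
      ∃ σ : Fin D → κ → ι, (∀ c i, #{k | σ c k = i} = μ i) ∧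
        ∀ i k, #{c | σ c k = i} = g i k
  | 0, g, _, hcol => ⟨Fin.elim0, fun c => c.elim0, fun i k => by
      simp [sum_eq_zero_iff.1 (hcol k) i (mem_univ i)]⟩
  | D + 1, g, hrow, hcol => by
    obtain ⟨τ, hτ, hpos⟩ := exists_assignment_of_regular D.succ_pos μ hμ g hrow hcol
    have hle : ∀ i k, (if τ k = i then 1 else 0) ≤ g i k := by
      intro i k
      split_ifs with h
      · exact h ▸ hpos k
      · exact Nat.zero_le _
    have hrow' : ∀ i, ∑ k, (g i k - if τ k = i then 1 else 0) = D * μ i := fun i => by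
      rw [sum_tsub_distrib _ fun k _ => hle i k, hrow i, ← card_filter, hτ i, add_one_mul,
        Nat.add_sub_cancel]
    have hcol' : ∀ k, ∑ i, (g i k - if τ k = i then 1 else 0) = D := fun k => by
      rw [sum_tsub_distrib _ fun i _ => hle i k, hcol k, sum_ite_eq]
      simp
    obtain ⟨σ, hσ, hσg⟩ := exists_decomposition_of_regular μ hμ D _ hrow' hcol'
    refine ⟨Fin.cons τ σ, fun c i => ?_, fun i k => ?_⟩
    · cases c using Fin.cases with
      | zero => simpa using hτ i
      | succ c => simpa using hσ c i
    · have hσik := hσg i k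
      rw [card_filter] at hσik
      rw [card_filter, Fin.sum_univ_succ]
      simp only [Fin.cons_zero, Fin.cons_succ]
      have := hle i k
      omega

end Combinatorics

variable {M K : ℕ} {m : Fin M → ℕ} {A : Fin M → Fin (K + 1) → ℝ} {a b : Fin (K + 1) → ℝ}

section HolePartition

/-- The partitions of the columns of the minor obtained by deleting column `j`, with the columns
kept at their indices in the full matrix (see `embedMinor`). -/
structure IsHolePartition (m : Fin M → ℕ) (j : Fin (K + 1))
    (R : Fin M → Finset (Fin (K + 1))) : Prop where
  card_eq : ∀ i, #(R i) = m i
  hole_notMem : ∀ i, j ∉ R i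
  existsUnique_mem : ∀ v, v ≠ j → ∃! i, v ∈ R i

theorem partSum_update (A : Fin M → Fin (K + 1) → ℝ) (R : Fin M → Finset (Fin (K + 1)))
    (i : Fin M) (B : Finset (Fin (K + 1))) :
    partSum A (Function.update R i B) = partSum A R - ∑ v ∈ R i, A i v + ∑ v ∈ B, A i v := by
  simp only [partSum]
  rw [← sum_erase_add _ _ (mem_univ i), ← sum_erase_add univ (fun i' => ∑ v ∈ R i', A i' v)
    (mem_univ i), sum_congr rfl fun i' hi' => by rw [Function.update_of_ne (ne_of_mem_erase hi')],
    Function.update_self]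
  abel

namespace IsHolePartition

variable {j : Fin (K + 1)} {R : Fin M → Finset (Fin (K + 1))}

theorem eq_of_mem (hR : IsHolePartition m j R) {v : Fin (K + 1)} {i i' : Fin M}
    (h : v ∈ R i) (h' : v ∈ R i') : i = i' :=
  (hR.existsUnique_mem v fun hv => hR.hole_notMem i (hv ▸ h)).unique h h'

theorem ne_hole (hR : IsHolePartition m j R) {v : Fin (K + 1)} {i : Fin M} (h : v ∈ R i) :
    v ≠ j :=
  fun hv => hR.hole_notMem i (hv ▸ h)

theorem sum_sum_eq (hR : IsHolePartition m j R) {β : Type*} [AddCommMonoid β]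
    (φ : Fin (K + 1) → β) : ∑ i, ∑ v ∈ R i, φ v = ∑ v ∈ univ.erase j, φ v := by
  have hU : univ.biUnion R = univ.erase j := by
    ext v
    simp only [mem_biUnion, mem_univ, true_and, mem_erase, and_true]
    exact ⟨fun ⟨i, hi⟩ => hR.ne_hole hi, fun hv => (hR.existsUnique_mem v hv).exists⟩
  rw [← hU, sum_biUnion fun i _ i' _ hii' =>
    disjoint_left.2 fun v hv hv' => hii' (hR.eq_of_mem hv hv')]

theorem sum_weights_eq (hR : IsHolePartition m j R) : ∑ i, m i = K := by
  have := hR.sum_sum_eq fun _ => 1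
  simpa [hR.card_eq] using this

theorem exchange (hR : IsHolePartition m j R) {c : Fin (K + 1)} {i : Fin M} (hc : c ∈ R i) :
    IsHolePartition m c (Function.update R i (insert j ((R i).erase c))) := by
  have hj : j ∉ (R i).erase c := fun h => hR.hole_notMem i (mem_of_mem_erase h)
  refine ⟨fun i' => ?_, fun i' => ?_, fun v hv => ?_⟩
  · rcases eq_or_ne i' i with rfl | hi'
    · rw [Function.update_self, card_insert_of_notMem hj, card_erase_of_mem hc, hR.card_eq,
        Nat.sub_add_cancel (hR.card_eq i' ▸ card_pos.2 ⟨c, hc⟩)]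
    · rw [Function.update_of_ne hi', hR.card_eq]
  · rcases eq_or_ne i' i with rfl | hi'
    · simp [hR.ne_hole hc]
    · rw [Function.update_of_ne hi']
      exact fun h => hi' (hR.eq_of_mem h hc)
  · rcases eq_or_ne v j with rfl | hvj
    · refine ⟨i, by simp, fun i' hi' => by_contra fun hne => hR.hole_notMem i' ?_⟩
      simpa [Function.update_of_ne hne] using hi'
    · have hmem : ∀ i', v ∈ Function.update R i (insert j ((R i).erase c)) i' ↔ v ∈ R i' := by
        intro i'
        rcases eq_or_ne i' i with rfl | hi'
        · simp [hv, hvj]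
        · rw [Function.update_of_ne hi']
      simpa only [hmem] using hR.existsUnique_mem v hvj

theorem partSum_exchange (hR : IsHolePartition m j R) {c : Fin (K + 1)} {i : Fin M}
    (hc : c ∈ R i) (A : Fin M → Fin (K + 1) → ℝ) :
    partSum A (Function.update R i (insert j ((R i).erase c))) = partSum A R - A i c + A i j := by
  rw [partSum_update, sum_insert fun h => hR.hole_notMem i (mem_of_mem_erase h),
    sum_erase_eq_sub hc]
  ring

theorem isTWPartition_fill (hR : IsHolePartition m j R) (i : Fin M) :
    IsTWPartition (m + Pi.single i 1) (Function.update R i (insert j (R i))) := by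
  refine ⟨fun i' => ?_, fun v => ?_⟩
  · rcases eq_or_ne i' i with rfl | hi'
    · simp [card_insert_of_notMem (hR.hole_notMem i'), hR.card_eq]
    · simp [hR.card_eq, hi']
  · rcases eq_or_ne v j with rfl | hvj
    · refine ⟨i, by simp, fun i' hi' => by_contra fun hne => hR.hole_notMem i' ?_⟩
      simpa [Function.update_of_ne hne] using hi'
    · have hmem : ∀ i', v ∈ Function.update R i (insert j (R i)) i' ↔ v ∈ R i' := by
        intro i'
        rcases eq_or_ne i' i with rfl | hi'
        · simp [hvj]
        · rw [Function.update_of_ne hi']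
      simpa only [hmem] using hR.existsUnique_mem v hvj

theorem partSum_fill (hR : IsHolePartition m j R) (A : Fin M → Fin (K + 1) → ℝ) (i : Fin M) :
    partSum A (Function.update R i (insert j (R i))) = partSum A R + A i j := by
  rw [partSum_update, sum_insert (hR.hole_notMem i)]
  ring

end IsHolePartition

/-- A cyclic exchange: when `z i ∈ R (f i)` for a permutation `f` of `C`, block `f i` hands
`z i` over to block `i`. -/
def rotate (R : Fin M → Finset (Fin (K + 1))) (C : Finset (Fin M)) (z : Fin M → Fin (K + 1)) :
    Fin M → Finset (Fin (K + 1)) :=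
  fun i => if i ∈ C then insert (z i) (R i \ C.image z) else R i

theorem IsHolePartition.rotate {j : Fin (K + 1)} {R : Fin M → Finset (Fin (K + 1))}
    (hR : IsHolePartition m j R) {C : Finset (Fin M)} {f : Fin M → Fin M}
    {z : Fin M → Fin (K + 1)} (hf : Set.BijOn f C C) (hz : ∀ i ∈ C, z i ∈ R (f i)) :
    IsHolePartition m j (TropicalCramer.rotate R C z) := by
  have hzinj : ∀ c ∈ C, ∀ c' ∈ C, z c = z c' → c = c' := fun c hc c' hc' h =>
    hf.injOn hc hc' (hR.eq_of_mem (hz c hc) (h ▸ hz c' hc'))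
  have hmem : ∀ i v, v ∈ TropicalCramer.rotate R C z i ↔
      (i ∈ C ∧ v = z i) ∨ (v ∉ C.image z ∧ v ∈ R i) := by
    intro i v
    by_cases hi : i ∈ C
    · simp [TropicalCramer.rotate, hi, and_comm]
    · simp only [TropicalCramer.rotate, hi, if_false, false_and, false_or, iff_and_self]
      intro hv hvZ
      obtain ⟨c, hc, rfl⟩ := mem_image.1 hvZ
      exact hi (hR.eq_of_mem hv (hz c hc) ▸ hf.mapsTo hc)
  refine ⟨fun i => ?_, fun i h => ?_, fun v hv => ?_⟩
  · by_cases hi : i ∈ C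
    · obtain ⟨i', hi', rfl⟩ := hf.surjOn hi
      have hinter : C.image z ∩ R (f i') = {z i'} := by
        ext v
        simp only [mem_inter, mem_image, mem_singleton]
        constructor
        · rintro ⟨⟨c, hc, rfl⟩, hv⟩
          rw [hzinj c hc i' hi' (by rw [hf.injOn hc hi' (hR.eq_of_mem (hz c hc) hv)])]
        · rintro rfl
          exact ⟨⟨i', hi', rfl⟩, hz i' hi'⟩
      have hpos : 0 < m (f i') := hR.card_eq (f i') ▸ card_pos.2 ⟨_, hz i' hi'⟩
      simp only [TropicalCramer.rotate, hi, if_true]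
      rw [card_insert_of_notMem fun h => (mem_sdiff.1 h).2 (mem_image_of_mem z hi),
        card_sdiff, hinter, card_singleton, hR.card_eq]
      omega
    · simp only [TropicalCramer.rotate, hi, if_false]
      exact hR.card_eq i
  · rcases (hmem i j).1 h with ⟨hi, hj⟩ | ⟨-, hj⟩
    · exact hR.ne_hole (hz i hi) hj.symm
    · exact hR.hole_notMem i hj
  · by_cases hvZ : v ∈ C.image z
    · obtain ⟨c, hc, rfl⟩ := mem_image.1 hvZ
      refine ⟨c, (hmem c _).2 (Or.inl ⟨hc, rfl⟩), fun i hi => ?_⟩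
      rcases (hmem i _).1 hi with ⟨hiC, hzi⟩ | ⟨hv, -⟩
      · exact hzinj i hiC c hc hzi.symm
      · exact absurd hvZ hv
    · have hmemR : ∀ i, v ∈ TropicalCramer.rotate R C z i ↔ v ∈ R i := fun i => by
        rw [hmem]
        exact ⟨fun h => h.elim (fun h => absurd (h.2 ▸ mem_image_of_mem z h.1) hvZ) And.right,
          fun h => Or.inr ⟨hvZ, h⟩⟩
      simpa only [hmemR] using hR.existsUnique_mem v hv

theorem isHolePartition_fibers {σ : Fin (K + 1) → Option (Fin M)} {j : Fin (K + 1)}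
    (hj : ∀ v, σ v = none ↔ v = j) (hm : ∀ i, #{v | σ v = some i} = m i) :
    IsHolePartition m j fun i => {v | σ v = some i} := by
  refine ⟨hm, fun i => by simp [(hj j).2 rfl], fun v hv => ?_⟩
  obtain ⟨i, hi⟩ := Option.ne_none_iff_exists'.1 (mt (hj v).1 hv)
  exact ⟨i, by simp [hi], fun i' hi' => by simpa [hi, eq_comm] using hi'⟩

def embedMinor (j : Fin (K + 1)) (P : Fin M → Finset (Fin K)) : Fin M → Finset (Fin (K + 1)) :=
  fun i => (P i).map j.succAboveEmb

theorem partSum_minorMatrix (A : Fin M → Fin (K + 1) → ℝ) (j : Fin (K + 1))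
    (P : Fin M → Finset (Fin K)) : partSum (minorMatrix A j) P = partSum A (embedMinor j P) := by
  simp [partSum, embedMinor, minorMatrix]

theorem embedMinor_injective (j : Fin (K + 1)) :
    Function.Injective (embedMinor (M := M) j) :=
  fun _ _ h => funext fun i => map_injective j.succAboveEmb (congrFun h i)

theorem _root_.IsTWPartition.isHolePartition_embedMinor {P : Fin M → Finset (Fin K)}
    (hP : IsTWPartition m P) (j : Fin (K + 1)) : IsHolePartition m j (embedMinor j P) := by
  refine ⟨fun i => by simp [embedMinor, hP.1 i], fun i => by simp [embedMinor], fun v hv => ?_⟩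
  obtain ⟨k, rfl⟩ := Fin.exists_succAbove_eq hv
  simpa [embedMinor] using hP.2 k

theorem IsHolePartition.exists_embedMinor_eq {j : Fin (K + 1)}
    {R : Fin M → Finset (Fin (K + 1))} (hR : IsHolePartition m j R) :
    ∃ P, IsTWPartition m P ∧ embedMinor j P = R := by
  have hsub : ∀ i, ∃ u ⊆ univ, R i = u.map j.succAboveEmb := fun i =>
    subset_map_iff.1 fun v hv => by
      obtain ⟨k, rfl⟩ := Fin.exists_succAbove_eq (hR.ne_hole hv)
      simp
  choose P _ hP using hsub
  have hR' : embedMinor j P = R := funext fun i => (hP i).symm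
  refine ⟨P, ⟨fun i => ?_, fun k => ?_⟩, hR'⟩
  · simpa [hP i] using hR.card_eq i
  · simpa [← hR', embedMinor] using hR.existsUnique_mem _ (Fin.succAbove_ne j k)

end HolePartition

section MinHoleCost

structure IsMinHoleCost (m : Fin M → ℕ) (A : Fin M → Fin (K + 1) → ℝ) (a : Fin (K + 1) → ℝ) :
    Prop where
  le_partSum : ∀ {j R}, IsHolePartition m j R → a j ≤ partSum A R
  exists_partSum_eq : ∀ j, ∃ R, IsHolePartition m j R ∧ partSum A R = a j

theorem isMinHoleCost_twPerm (hw : ∑ i, m i = K) (A : Fin M → Fin (K + 1) → ℝ) :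
    IsMinHoleCost m A fun j => twPerm m (minorMatrix A j) where
  le_partSum {j R} hR := by
    obtain ⟨P, hP, rfl⟩ := hR.exists_embedMinor_eq
    rw [← partSum_minorMatrix]
    exact csInf_le ((Set.toFinite _).image _).bddBelow ⟨P, hP, rfl⟩
  exists_partSum_eq j := by
    obtain ⟨P₀, hP₀⟩ := exists_isTWPartition hw
    obtain ⟨P, hP, hPeq⟩ := (Set.Nonempty.image (partSum (minorMatrix A j))
      (s := {P | IsTWPartition m P}) ⟨P₀, hP₀⟩).csInf_mem ((Set.toFinite _).image _)
    exact ⟨embedMinor j P, hP.isHolePartition_embedMinor j, by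
      rw [← partSum_minorMatrix, hPeq]; rfl⟩

theorem IsMinHoleCost.twSingular_minorMatrix_iff (ha : IsMinHoleCost m A a) {j : Fin (K + 1)} :
    TWSingular m (minorMatrix A j) ↔ ∃ R R', IsHolePartition m j R ∧ IsHolePartition m j R' ∧
      R ≠ R' ∧ partSum A R = a j ∧ partSum A R' = a j := by
  constructor
  · rintro ⟨P, Q, hP : IsTWPartition m P, hQ : IsTWPartition m Q, hPQ, hsum, hmin⟩
    have hPa : partSum A (embedMinor j P) = a j := by
      obtain ⟨R₀, hR₀, hR₀a⟩ := ha.exists_partSum_eq j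
      obtain ⟨P₀, hP₀, rfl⟩ := hR₀.exists_embedMinor_eq
      refine le_antisymm ?_ (ha.le_partSum (hP.isHolePartition_embedMinor j))
      rw [← hR₀a, ← partSum_minorMatrix, ← partSum_minorMatrix]
      exact hmin P₀ hP₀
    refine ⟨_, _, hP.isHolePartition_embedMinor j, hQ.isHolePartition_embedMinor j,
      (embedMinor_injective j).ne hPQ, hPa, ?_⟩
    rwa [← partSum_minorMatrix, ← hsum, partSum_minorMatrix]
  · rintro ⟨R, R', hR, hR', hne, hRa, hR'a⟩
    obtain ⟨P, hP, rfl⟩ := hR.exists_embedMinor_eq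
    obtain ⟨Q, hQ, rfl⟩ := hR'.exists_embedMinor_eq
    refine ⟨P, Q, hP, hQ, fun h => hne (h ▸ rfl), by
      rw [partSum_minorMatrix, partSum_minorMatrix, hRa, hR'a],
      fun P' (hP' : IsTWPartition m P') => ?_⟩
    rw [partSum_minorMatrix, partSum_minorMatrix, hRa]
    exact ha.le_partSum (hP'.isHolePartition_embedMinor j)

end MinHoleCost

section TightSet

noncomputable def rowMin (A : Fin M → Fin (K + 1) → ℝ) (a : Fin (K + 1) → ℝ) (i : Fin M) : ℝ :=
  univ.inf' univ_nonempty fun j => a j + A i j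

noncomputable def tightSet (A : Fin M → Fin (K + 1) → ℝ) (a : Fin (K + 1) → ℝ) (i : Fin M) :
    Finset (Fin (K + 1)) :=
  {j | ∀ k, a j + A i j ≤ a k + A i k}

def HasMultAtLeast (m : Fin M → ℕ) (A : Fin M → Fin (K + 1) → ℝ) (a : Fin (K + 1) → ℝ) : Prop :=
  ∀ i, m i + 1 ≤ #(tightSet A a i)

theorem rowMin_le (i : Fin M) (j : Fin (K + 1)) : rowMin A a i ≤ a j + A i j :=
  inf'_le _ (mem_univ j)

theorem exists_eq_rowMin (i : Fin M) : ∃ j, a j + A i j = rowMin A a i := by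
  obtain ⟨j, -, hj⟩ := exists_mem_eq_inf' univ_nonempty fun j => a j + A i j
  exact ⟨j, hj.symm⟩

theorem mem_tightSet_iff {i : Fin M} {j : Fin (K + 1)} :
    j ∈ tightSet A a i ↔ a j + A i j = rowMin A a i := by
  obtain ⟨k, hk⟩ := exists_eq_rowMin (A := A) (a := a) i
  simp only [tightSet, mem_filter, mem_univ, true_and]
  exact ⟨fun h => le_antisymm (hk ▸ h k) (rowMin_le i j), fun h k => h ▸ rowMin_le i k⟩

theorem mem_tightSet_of_le {i : Fin M} {j : Fin (K + 1)} (h : a j + A i j ≤ rowMin A a i) :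
    j ∈ tightSet A a i :=
  mem_tightSet_iff.2 (le_antisymm h (rowMin_le i j))

theorem IsMinHoleCost.add_le_of_mem (ha : IsMinHoleCost m A a) {j c : Fin (K + 1)} {i : Fin M}
    {R : Fin M → Finset (Fin (K + 1))} (hR : IsHolePartition m j R) (hRa : partSum A R = a j)
    (hc : c ∈ R i) : a c + A i c ≤ a j + A i j := by
  have := ha.le_partSum (hR.exchange hc)
  rw [hR.partSum_exchange hc, hRa] at this
  linarith

theorem IsMinHoleCost.exists_fill (ha : IsMinHoleCost m A a) (i : Fin M) :
    ∃ Q, IsTWPartition (m + Pi.single i 1) Q ∧ partSum A Q = rowMin A a i ∧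
      Q i ⊆ tightSet A a i := by
  obtain ⟨j, hj⟩ := exists_eq_rowMin (A := A) (a := a) i
  obtain ⟨R, hR, hRa⟩ := ha.exists_partSum_eq j
  refine ⟨_, hR.isTWPartition_fill i, by rw [hR.partSum_fill, hRa, hj], fun c hc => ?_⟩
  rw [Function.update_self, mem_insert] at hc
  rcases hc with rfl | hc
  · exact mem_tightSet_of_le hj.le
  · exact mem_tightSet_of_le (hj ▸ ha.add_le_of_mem hR hRa hc)

theorem IsMinHoleCost.hasMultAtLeast (ha : IsMinHoleCost m A a) : HasMultAtLeast m A a := by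
  intro i
  obtain ⟨Q, hQ, -, hQi⟩ := ha.exists_fill i
  simpa [hQ.1 i] using card_le_card hQi

end TightSet

section SumIdentity

theorem IsHolePartition.partSum_eq_add_slack {j : Fin (K + 1)}
    {R : Fin M → Finset (Fin (K + 1))} (hR : IsHolePartition m j R)
    (A : Fin M → Fin (K + 1) → ℝ) (a : Fin (K + 1) → ℝ) :
    partSum A R = ∑ i, m i * rowMin A a i - ∑ v, a v + a j +
      ∑ i, ∑ v ∈ R i, (a v + A i v - rowMin A a i) := by
  simp only [sum_sub_distrib, sum_add_distrib, sum_const, hR.card_eq, nsmul_eq_mul,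
    hR.sum_sum_eq a, sum_erase_eq_sub (mem_univ j), partSum]
  ring

/-- The multigraph with an extra row `none` joined once to every column, and row `some i` joined
to column `v` with multiplicity `m i'` for each `i'` with `v ∈ Q i' i`, is `(K + 1)`-regular. -/
theorem exists_layers_of_covers (hw : ∑ i, m i = K) {Q : Fin M → Fin M → Finset (Fin (K + 1))}
    (hQ : ∀ i', IsTWPartition (m + Pi.single i' 1) (Q i')) :
    ∃ σ : Fin (K + 1) → Fin (K + 1) → Option (Fin M),
      (∀ c o, #{v | σ c v = o} = o.elim 1 m) ∧
      ∀ o v, #{c | σ c v = o} = o.elim 1 fun i => ∑ i', if v ∈ Q i' i then m i' else 0 := by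
  refine exists_decomposition_of_regular _ (by simp [Fintype.sum_option, hw, add_comm]) _ _
    (fun o => ?_) fun v => ?_
  · rcases o with _ | i
    · simp
    · calc ∑ v, ∑ i', (if v ∈ Q i' i then m i' else 0)
          = ∑ i', (m + Pi.single i' 1 : Fin M → ℕ) i * m i' := by
            rw [sum_comm]
            refine sum_congr rfl fun i' _ => ?_
            rw [sum_ite_mem, univ_inter, sum_const, (hQ i').1 i, smul_eq_mul]
        _ = (K + 1) * m i := by
            simp only [Pi.add_apply, Pi.single_apply, add_mul, sum_add_distrib, ite_mul,
              one_mul, zero_mul, sum_ite_eq, mem_univ, if_true]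
            rw [← mul_sum, hw]
            ring
  · simp only [Fintype.sum_option, Option.elim_none, Option.elim_some]
    rw [sum_comm]
    simp only [← sum_filter, sum_const, (hQ _).card_filter_mem, one_smul, hw, add_comm]

theorem IsMinHoleCost.sum_elim_nonneg (ha : IsMinHoleCost m A a)
    {σ : Fin (K + 1) → Option (Fin M)} (hσ : ∀ o, #{v | σ v = o} = o.elim 1 m) :
    0 ≤ ∑ v, (σ v).elim (-a v) fun i => A i v := by
  obtain ⟨j, hj⟩ := card_eq_one.1 (hσ none)
  have hR := isHolePartition_fibers (fun v => by simpa using congrArg (v ∈ ·) hj)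
    fun i => hσ (some i)
  rw [sum_eq_sum_fiberwise σ fun o v => o.elim (-a v) fun i => A i v, Fintype.sum_option, hj]
  simp only [Option.elim_none, Option.elim_some, sum_singleton]
  linarith [ha.le_partSum hR, show partSum A (fun i => {v | σ v = some i}) =
    ∑ i, ∑ v with σ v = some i, A i v from rfl]

theorem IsMinHoleCost.sum_le_sum_mul_partSum (ha : IsMinHoleCost m A a)
    {Q : Fin M → Fin M → Finset (Fin (K + 1))}
    (hQ : ∀ i', IsTWPartition (m + Pi.single i' 1) (Q i')) :
    ∑ v, a v ≤ ∑ i', m i' * partSum A (Q i') := by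
  obtain ⟨R₀, hR₀, -⟩ := ha.exists_partSum_eq 0
  obtain ⟨σ, hσ, hσg⟩ := exists_layers_of_covers hR₀.sum_weights_eq hQ
  have htotal : ∑ c, ∑ v, (σ c v).elim (-a v) (fun i => A i v) =
      -∑ v, a v + ∑ i', m i' * partSum A (Q i') := by
    refine (sum_sum_eq_sum_card_mul σ fun o v => o.elim (-a v) fun i => A i v).trans ?_
    simp only [hσg, Fintype.sum_option, Option.elim_none, Option.elim_some, partSum]
    push_cast
    simp only [one_mul, sum_add_distrib, sum_neg_distrib, sum_mul, ite_mul, zero_mul]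
    congr 1
    calc ∑ v, ∑ i, ∑ i', (if v ∈ Q i' i then (m i' : ℝ) * A i v else 0)
        = ∑ i, ∑ i', ∑ v, (if v ∈ Q i' i then (m i' : ℝ) * A i v else 0) := by
          rw [sum_comm]
          exact sum_congr rfl fun i _ => sum_comm
      _ = ∑ i', ∑ i, ∑ v, (if v ∈ Q i' i then (m i' : ℝ) * A i v else 0) := sum_comm
      _ = ∑ i', m i' * ∑ i, ∑ v ∈ Q i' i, A i v := by simp [mul_sum, sum_ite_mem]
  linarith [sum_nonneg fun c (_ : c ∈ univ) => ha.sum_elim_nonneg (hσ c)]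

theorem IsMinHoleCost.sum_eq_sum_mul_rowMin (ha : IsMinHoleCost m A a) :
    ∑ v, a v = ∑ i, m i * rowMin A a i := by
  refine le_antisymm ?_ ?_
  · choose Q hQ hQA _ using ha.exists_fill
    simpa [hQA] using ha.sum_le_sum_mul_partSum hQ
  · obtain ⟨R, hR, hRa⟩ := ha.exists_partSum_eq 0
    have hslack : 0 ≤ ∑ i, ∑ v ∈ R i, (a v + A i v - rowMin A a i) :=
      sum_nonneg fun i _ => sum_nonneg fun v _ => sub_nonneg.2 (rowMin_le i v)
    linarith [hR.partSum_eq_add_slack A a]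

theorem IsMinHoleCost.partSum_eq_iff (ha : IsMinHoleCost m A a) {j : Fin (K + 1)}
    {R : Fin M → Finset (Fin (K + 1))} (hR : IsHolePartition m j R) :
    partSum A R = a j ↔ ∀ i, R i ⊆ tightSet A a i := by
  have hslack : ∀ i v, 0 ≤ a v + A i v - rowMin A a i := fun i v => sub_nonneg.2 (rowMin_le i v)
  rw [hR.partSum_eq_add_slack A a, ← ha.sum_eq_sum_mul_rowMin, sub_self, zero_add,
    add_eq_left, sum_eq_zero_iff_of_nonneg fun i _ => sum_nonneg fun v _ => hslack i v]
  simp only [mem_univ, true_imp_iff, sum_eq_zero_iff_of_nonneg fun v _ => hslack _ v,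
    sub_eq_zero, ← mem_tightSet_iff]
  rfl

end SumIdentity

section Raisable

/-- Raising `a` by a small constant on `S` keeps the multiplicities. -/
def IsRaisable (m : Fin M → ℕ) (A : Fin M → Fin (K + 1) → ℝ) (a : Fin (K + 1) → ℝ)
    (S : Finset (Fin (K + 1))) : Prop :=
  S.Nonempty ∧ S ≠ univ ∧ ∀ i, tightSet A a i ⊆ S ∨ m i + 1 ≤ #(tightSet A a i \ S)

theorem IsRaisable.exists_hasMultAtLeast {S : Finset (Fin (K + 1))} (hS : IsRaisable m A a S)
    (ha : HasMultAtLeast m A a) :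
    ∃ b, HasMultAtLeast m A b ∧ ¬ ∃ c, ∀ j, b j = a j + c := by
  obtain ⟨⟨j₁, hj₁⟩, hSu, hrows⟩ := hS
  obtain ⟨j₂, hj₂⟩ : ∃ j₂, j₂ ∉ S := by simpa [eq_univ_iff_forall] using hSu
  obtain ⟨s, hs, hsle⟩ :=
    exists_pos_forall_le fun p : Fin M × Fin (K + 1) => a p.2 + A p.1 p.2 - rowMin A a p.1
  refine ⟨fun j => a j + if j ∈ S then s else 0, fun i => ?_, fun ⟨c, hc⟩ => ?_⟩
  · have hle : ∀ k, rowMin A a i ≤ (a k + if k ∈ S then s else 0) + A i k := fun k => by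
      have := rowMin_le (A := A) (a := a) i k
      split_ifs <;> linarith
    rcases hrows i with hsub | hcard
    · refine (ha i).trans (card_le_card fun k hk => ?_)
      have hkt := mem_tightSet_iff.1 hk
      simp only [tightSet, mem_filter, mem_univ, true_and, hsub hk, if_true]
      intro k'
      by_cases hk' : k' ∈ S
      · simp only [hk', if_true]
        linarith [rowMin_le (A := A) (a := a) i k']
      · have hpos : 0 < a k' + A i k' - rowMin A a i :=
          sub_pos.2 (lt_of_le_of_ne (rowMin_le i k') fun h =>
            hk' (hsub (mem_tightSet_iff.2 h.symm)))
        simp only [hk', if_false]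
        linarith [hsle (i, k') hpos]
    · refine hcard.trans (card_le_card fun k hk => ?_)
      obtain ⟨hkt, hkS⟩ := mem_sdiff.1 hk
      simp only [tightSet, mem_filter, mem_univ, true_and, hkS, if_false, add_zero]
      exact fun k' => mem_tightSet_iff.1 hkt ▸ hle k'
  · have h₁ := hc j₁
    have h₂ := hc j₂
    simp only [hj₁, hj₂, if_true, if_false] at h₁ h₂
    linarith

theorem exists_isRaisable_of_hasMultAtLeast (hb : HasMultAtLeast m A b)
    (hne : ¬ ∃ c, ∀ j, b j = a j + c) : ∃ S, IsRaisable m A a S := by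
  obtain ⟨j₀, -, hj₀⟩ := exists_min_image univ (fun j => b j - a j) univ_nonempty
  refine ⟨({j | b j₀ - a j₀ < b j - a j} : Finset _), ?_,
    fun h => by simpa using (eq_univ_iff_forall.1 h) j₀,
    fun i => or_iff_not_imp_left.2 fun hsub => (hb i).trans (card_le_card fun k hk => ?_)⟩
  · by_contra hS
    refine hne ⟨b j₀ - a j₀, fun j => ?_⟩
    have : ¬ b j₀ - a j₀ < b j - a j := fun h => hS ⟨j, by simpa using h⟩
    linarith [hj₀ j (mem_univ j)]
  · obtain ⟨j', hj'T, hj'S⟩ := not_subset.1 hsub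
    have hj'd : b j' - a j' = b j₀ - a j₀ :=
      le_antisymm (by simpa using hj'S) (hj₀ j' (mem_univ _))
    have hk' := (mem_filter.1 hk).2 j'
    have h1 := rowMin_le (A := A) (a := a) i k
    have h2 := hj₀ k (mem_univ k)
    have h3 := mem_tightSet_iff.1 hj'T
    refine mem_sdiff.2 ⟨mem_tightSet_of_le (by linarith), ?_⟩
    simp only [mem_filter, mem_univ, true_and, not_lt]
    linarith

theorem HasMultAtLeast.exists_isRaisable_iff (ha : HasMultAtLeast m A a) :
    (∃ S, IsRaisable m A a S) ↔ ∃ b, HasMultAtLeast m A b ∧ ¬ ∃ c, ∀ j, b j = a j + c :=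
  ⟨fun ⟨_, hS⟩ => hS.exists_hasMultAtLeast ha,
    fun ⟨_, hb, hne⟩ => exists_isRaisable_of_hasMultAtLeast hb hne⟩

variable {j : Fin (K + 1)} {R : Fin M → Finset (Fin (K + 1))}

def Forces (m : Fin M → ℕ) (A : Fin M → Fin (K + 1) → ℝ) (a : Fin (K + 1) → ℝ) (j : Fin (K + 1))
    (R : Fin M → Finset (Fin (K + 1))) (S : Finset (Fin (K + 1))) (D : Finset (Fin M)) : Prop :=
  j ∈ S ∧ (∀ i ∈ D, tightSet A a i ⊆ S) ∧ ∀ T, IsHolePartition m j T →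
    (∀ i, T i ⊆ tightSet A a i) → ∀ i, (i ∈ D → T i = R i) ∧ (i ∉ D → Disjoint (T i) S)

/-- A row whose tight set leaves `S` but has at most `m i` columns outside `S` has its block
forced to be exactly those columns. -/
theorem Forces.exists_card_lt {S : Finset (Fin (K + 1))} {D : Finset (Fin M)}
    (h : Forces m A a j R S D) (hR : IsHolePartition m j R) (hRt : ∀ i, R i ⊆ tightSet A a i)
    (hS : S ≠ univ) (hnot : ¬ IsRaisable m A a S) :
    ∃ S' D', Forces m A a j R S' D' ∧ #S < #S' := by
  obtain ⟨hjS, hDS, hforce⟩ := h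
  obtain ⟨i₀, hi₀S, hi₀⟩ : ∃ i₀, ¬ tightSet A a i₀ ⊆ S ∧ #(tightSet A a i₀ \ S) ≤ m i₀ := by
    by_contra! hall
    exact hnot ⟨⟨j, hjS⟩, hS, fun i => or_iff_not_imp_left.2 fun hi => hall i hi⟩
  have hi₀D : i₀ ∉ D := fun hi => hi₀S (hDS i₀ hi)
  have hforced : ∀ T, IsHolePartition m j T → (∀ i, T i ⊆ tightSet A a i) →
      T i₀ = tightSet A a i₀ \ S := fun T hT hTt =>
    eq_of_subset_of_card_le (fun v hv => mem_sdiff.2 ⟨hTt i₀ hv,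
      disjoint_left.1 ((hforce T hT hTt i₀).2 hi₀D) hv⟩) (hT.card_eq i₀ ▸ hi₀)
  refine ⟨S ∪ tightSet A a i₀, insert i₀ D, ⟨mem_union_left _ hjS, fun i hi => ?_,
    fun T hT hTt i => ⟨fun hi => ?_, fun hi => ?_⟩⟩, ?_⟩
  · rcases mem_insert.1 hi with rfl | hi
    · exact subset_union_right
    · exact (hDS i hi).trans subset_union_left
  · rcases mem_insert.1 hi with rfl | hi
    · rw [hforced T hT hTt, hforced R hR hRt]
    · exact (hforce T hT hTt i).1 hi
  · obtain ⟨hii₀, hiD⟩ := not_or.1 (mt mem_insert.2 hi)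
    have hdisj := (hforce T hT hTt i).2 hiD
    refine disjoint_union_right.2 ⟨hdisj, disjoint_left.2 fun v hvT hvt => hii₀ ?_⟩
    exact hT.eq_of_mem hvT
      (hforced T hT hTt ▸ mem_sdiff.2 ⟨hvt, disjoint_left.1 hdisj hvT⟩)
  · obtain ⟨v, hvt, hvS⟩ := not_subset.1 hi₀S
    exact card_lt_card (Finset.ssubset_iff_subset_ne.2 ⟨subset_union_left,
      fun h => hvS (h ▸ mem_union_right _ hvt)⟩)

theorem exists_isRaisable_of_ne {R' : Fin M → Finset (Fin (K + 1))}
    (hR : IsHolePartition m j R) (hRt : ∀ i, R i ⊆ tightSet A a i)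
    (hR' : IsHolePartition m j R') (hR't : ∀ i, R' i ⊆ tightSet A a i) (hne : R ≠ R') :
    ∃ S, IsRaisable m A a S := by
  classical
  by_contra! hnot
  have hstart : Forces m A a j R {j} ∅ := ⟨mem_singleton_self j, by simp,
    fun T hT _ i => ⟨by simp, fun _ => disjoint_singleton_right.2 (hT.hole_notMem i)⟩⟩
  obtain ⟨⟨S, D⟩, hSD, hmax⟩ := exists_max_image
    ({p | Forces m A a j R p.1 p.2} : Finset (Finset (Fin (K + 1)) × Finset (Fin M)))
    (fun p => #p.1) ⟨({j}, ∅), mem_filter.2 ⟨mem_univ _, hstart⟩⟩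
  have hforces : Forces m A a j R S D := (mem_filter.1 hSD).2
  have hS : S = univ := by
    by_contra hS
    obtain ⟨S', D', h', hlt⟩ := hforces.exists_card_lt hR hRt hS (hnot S)
    exact (hmax (S', D') (mem_filter.2 ⟨mem_univ _, h'⟩)).not_gt hlt
  refine hne (funext fun i => ?_).symm
  by_cases hi : i ∈ D
  · exact (hforces.2.2 R' hR' hR't i).1 hi
  · have h₁ := (hforces.2.2 R' hR' hR't i).2 hi
    have h₂ := (hforces.2.2 R hR hRt i).2 hi
    rw [hS] at h₁ h₂
    ext v
    exact ⟨fun hv => absurd (mem_univ v) (disjoint_left.1 h₁ hv),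
      fun hv => absurd (mem_univ v) (disjoint_left.1 h₂ hv)⟩

theorem IsRaisable.exists_exchange {S : Finset (Fin (K + 1))} (hS : IsRaisable m A a S)
    (hjS : j ∈ S) (hR : IsHolePartition m j R) (hRt : ∀ i, R i ⊆ tightSet A a i) {i : Fin M}
    (hi : ¬ tightSet A a i ⊆ S) :
    ∃ v i', v ∈ tightSet A a i ∧ v ∉ R i ∧ v ∈ R i' ∧ ¬ tightSet A a i' ⊆ S := by
  obtain ⟨v, hv, hvR⟩ := not_subset.1 fun h : tightSet A a i \ S ⊆ R i => by
    have := card_le_card h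
    have := (hS.2.2 i).resolve_left hi
    rw [hR.card_eq] at *
    omega
  obtain ⟨hvt, hvS⟩ := mem_sdiff.1 hv
  obtain ⟨i', hi', -⟩ := hR.existsUnique_mem v fun h => hvS (h ▸ hjS)
  exact ⟨v, i', hvt, hvR, hi', fun hsub => hvS (hsub (hRt i' hi'))⟩

/-- Following the exchanges of `IsRaisable.exists_exchange` from block to block eventually runs
into a cycle, along which the tight columns outside `S` can be rotated. -/
theorem IsRaisable.exists_ne {S : Finset (Fin (K + 1))} (hS : IsRaisable m A a S) (hjS : j ∈ S)
    (hR : IsHolePartition m j R) (hRt : ∀ i, R i ⊆ tightSet A a i) :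
    ∃ R', IsHolePartition m j R' ∧ (∀ i, R' i ⊆ tightSet A a i) ∧ R' ≠ R := by
  classical
  obtain ⟨i₀, hi₀⟩ : ∃ i₀, ¬ tightSet A a i₀ ⊆ S := by
    obtain ⟨v, hvS⟩ : ∃ v, v ∉ S := by simpa [eq_univ_iff_forall] using hS.2.1
    obtain ⟨i, hi, -⟩ := hR.existsUnique_mem v fun h => hvS (h ▸ hjS)
    exact ⟨i, fun hsub => hvS (hsub (hRt i hi))⟩
  have hstep : ∀ i, ∃ p : Fin (K + 1) × Fin M, ¬ tightSet A a p.2 ⊆ S ∧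
      (¬ tightSet A a i ⊆ S → p.1 ∈ tightSet A a i ∧ p.1 ∉ R i ∧ p.1 ∈ R p.2) := fun i => by
    by_cases hi : tightSet A a i ⊆ S
    · exact ⟨(j, i₀), hi₀, fun h => absurd hi h⟩
    · obtain ⟨v, i', hvt, hvR, hi', hi'S⟩ := hS.exists_exchange hjS hR hRt hi
      exact ⟨(v, i'), hi'S, fun _ => ⟨hvt, hvR, hi'⟩⟩
  have : Nonempty (Fin M) := ⟨i₀⟩
  choose p hpS hp using hstep
  set f : Fin M → Fin M := fun i => (p i).2
  set z : Fin M → Fin (K + 1) := fun i => (p i).1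
  set C : Finset (Fin M) := {i | i ∈ Function.periodicPts f}
  have hCS : ∀ i ∈ C, ¬ tightSet A a i ⊆ S := fun i hi => by
    obtain ⟨i', rfl⟩ := Function.periodicPts_subset_range (mem_filter.1 hi).2
    exact hpS i'
  have hf : Set.BijOn f C C := by simpa [C] using Function.bijOn_periodicPts f
  obtain ⟨c, hc⟩ := nonempty_periodicPts f
  have hcC : c ∈ C := mem_filter.2 ⟨mem_univ _, hc⟩
  refine ⟨rotate R C z, hR.rotate hf fun i hi => (hp i (hCS i hi)).2.2, fun i v hv => ?_,
    fun h => (hp c (hCS c hcC)).2.1 ?_⟩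
  · by_cases hi : i ∈ C
    · simp only [rotate, hi, if_true, mem_insert, mem_sdiff] at hv
      rcases hv with rfl | ⟨hv, -⟩
      · exact (hp i (hCS i hi)).1
      · exact hRt i hv
    · simp only [rotate, hi, if_false] at hv
      exact hRt i hv
  · rw [← h]
    simp [rotate, hcC, z]

theorem IsMinHoleCost.exists_isRaisable_iff (ha : IsMinHoleCost m A a) :
    (∃ S, IsRaisable m A a S) ↔ ∃ j, TWSingular m (minorMatrix A j) := by
  constructor
  · rintro ⟨S, hS⟩
    obtain ⟨j, hjS⟩ := hS.1
    obtain ⟨R, hR, hRa⟩ := ha.exists_partSum_eq j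
    obtain ⟨R', hR', hR't, hne⟩ := hS.exists_ne hjS hR ((ha.partSum_eq_iff hR).1 hRa)
    exact ⟨j, ha.twSingular_minorMatrix_iff.2
      ⟨R', R, hR', hR, hne, (ha.partSum_eq_iff hR').2 hR't, hRa⟩⟩
  · rintro ⟨j, hj⟩
    obtain ⟨R, R', hR, hR', hne, hRa, hR'a⟩ := ha.twSingular_minorMatrix_iff.1 hj
    exact exists_isRaisable_of_ne hR ((ha.partSum_eq_iff hR).1 hRa) hR'
      ((ha.partSum_eq_iff hR').1 hR'a) hne

end Raisable

theorem forall_multAtLeast_iff {n : ℕ} (I : Fin (K + 1) → Fin n → ℤ) (x : Fin M → Fin n → ℝ)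
    (b : Fin (K + 1) → ℝ) :
    (∀ i, MultAtLeast I b (x i) (m i)) ↔ HasMultAtLeast m (fun i j => dotIR (I j) (x i)) b := by
  refine forall_congr' fun i => ?_
  rw [MultAtLeast, ← Set.ncard_coe_finset]
  simp [tightSet]

end TropicalCramer

open TropicalCramer

theorem cramer_hypersurface_general {n M K : ℕ} (m : Fin M → ℕ)
    (hw : ∑ i, m i = K)
    (I : Fin (K + 1) → Fin n → ℤ)
    (x : Fin M → Fin n → ℝ)
    (A : Fin M → Fin (K + 1) → ℝ)
    (hA : A = fun i j => dotIR (I j) (x i))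
    (a : Fin (K + 1) → ℝ)
    (ha : a = fun j => twPerm m (minorMatrix A j)) :
    (∀ i, MultAtLeast I a (x i) (m i)) ∧
      ((∀ a' : Fin (K + 1) → ℝ, (∀ i, MultAtLeast I a' (x i) (m i)) →
          ∃ c : ℝ, ∀ j, a' j = a j + c) ↔
        ∀ j : Fin (K + 1), ¬ TWSingular m (minorMatrix A j)) := by
  subst hA
  have hmin := ha ▸ isMinHoleCost_twPerm hw _
  simp only [forall_multAtLeast_iff]
  refine ⟨hmin.hasMultAtLeast, ?_⟩
  have key := hmin.hasMultAtLeast.exists_isRaisable_iff.symm.trans hmin.exists_isRaisable_iff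
  simpa only [not_exists, not_and, not_forall, not_not] using not_congr key

/-- Geometric tropical weighted Cramer's rule: for an `n`-dimensional lattice polytope `Δ`
with `N = K + 1` lattice points `I j`, points `x i` with multiplicities `m i` summing to
`N - 1 = K`, the coefficient vector of maximal tw-minors of the evaluation matrix
`A i j = I j · x i` defines a hypersurface with multiplicity at least `m i` at each `x i`;
it is the unique such coefficient vector (up to adding a constant) iff all maximal
tw-minors of `A` are tw-nonsingular. -/
theorem cramer_hypersurface {n M K : ℕ} (m : Fin M → ℕ)
    (hm : ∀ i, 1 ≤ m i) (hw : ∑ i, m i = K)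
    (I : Fin (K + 1) → Fin n → ℤ) (hI : Function.Injective I)
    (Δ : Set (Fin n → ℝ))
    (hΔ : Δ = convexHull ℝ (Set.range fun j => toR (I j)))
    (hlat : ∀ p : Fin n → ℤ, toR p ∈ Δ ↔ ∃ j, I j = p)
    (hdim : Module.finrank ℝ (vectorSpan ℝ Δ) = n)
    (x : Fin M → Fin n → ℝ)
    (A : Fin M → Fin (K + 1) → ℝ)
    (hA : A = fun i j => dotIR (I j) (x i))
    (a : Fin (K + 1) → ℝ)
    (ha : a = fun j => twPerm m (minorMatrix A j)) :
    (∀ i, MultAtLeast I a (x i) (m i)) ∧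
      ((∀ a' : Fin (K + 1) → ℝ, (∀ i, MultAtLeast I a' (x i) (m i)) →
          ∃ c : ℝ, ∀ j, a' j = a j + c) ↔
        ∀ j : Fin (K + 1), ¬ TWSingular m (minorMatrix A j)) :=
  cramer_hypersurface_general m hw I x A hA a ha
end

section
/- Let 𝒫 be a lattice simplicial decomposition of a lattice polytope Δ ⊂ ℝⁿ with a weighting μ satisfying |μ| = |Δ| − 1. If there exists a nonempty subset L ⊆ L(Δ) with used(L) ≥ |L|, then μ is not rigid. -/
open Set

/-- A point of `ℝⁿ` with integer coordinates. -/
def IsLatticePoint {n : ℕ} (x : Fin n → ℝ) : Prop := ∀ i, ∃ z : ℤ, x i = (z : ℝ)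

/-- The lattice points of a subset of `ℝⁿ`. -/
def latticePts {n : ℕ} (P : Set (Fin n → ℝ)) : Set (Fin n → ℝ) :=
  {x ∈ P | IsLatticePoint x}

/-- A lattice polytope: the convex hull of finitely many lattice points. -/
def IsLatticePolytope {n : ℕ} (P : Set (Fin n → ℝ)) : Prop :=
  ∃ S : Finset (Fin n → ℝ), (∀ x ∈ S, IsLatticePoint x) ∧
    P = convexHull ℝ (S : Set (Fin n → ℝ))

/-- The dimension of a polytope: the rank of its direction space. -/
noncomputable def polyDim {n : ℕ} (P : Set (Fin n → ℝ)) : ℕ :=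
  Module.finrank ℝ (vectorSpan ℝ P)

/-- A lattice polyhedral decomposition of `Δ`. -/
def IsLatticeDecomp {n : ℕ} (Δ : Set (Fin n → ℝ)) (cplx : Finset (Set (Fin n → ℝ))) : Prop :=
  (∀ P ∈ cplx, P.Nonempty) ∧
  (∀ P ∈ cplx, IsLatticePolytope P) ∧
  (∀ P ∈ cplx, ∀ F : Set (Fin n → ℝ), IsExtreme ℝ P F → F.Nonempty → F ∈ cplx) ∧
  (∀ P ∈ cplx, ∀ Q ∈ cplx, IsExtreme ℝ P (P ∩ Q) ∧ IsExtreme ℝ Q (P ∩ Q)) ∧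
  ⋃₀ (cplx : Set (Set (Fin n → ℝ))) = Δ

/-- A weighting of `cplx`: `0 ≤ μ P ≤ |P| - 1` for all members `P`. -/
def IsWeighting {n : ℕ} (cplx : Finset (Set (Fin n → ℝ))) (μ : Set (Fin n → ℝ) → ℤ) : Prop :=
  ∀ P ∈ cplx, 0 ≤ μ P ∧ μ P ≤ ((latticePts P).ncard : ℤ) - 1

/-- `cplx` is lattice simplicial. -/
def LatticeSimplicial {n : ℕ} (cplx : Finset (Set (Fin n → ℝ))) : Prop :=
  ∀ P ∈ cplx, (latticePts P).ncard = polyDim P + 1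

/-- The vertices (`0`-dimensional members) of `cplx`, as a set of points. -/
def vertexSet {n : ℕ} (cplx : Finset (Set (Fin n → ℝ))) : Set (Fin n → ℝ) :=
  {x | ({x} : Set (Fin n → ℝ)) ∈ cplx}

/-- `L` is deformable with respect to `μ`. -/
def Deformable {n : ℕ} (Δ : Set (Fin n → ℝ)) (cplx : Finset (Set (Fin n → ℝ)))
    (μ : Set (Fin n → ℝ) → ℤ) (L : Set (Fin n → ℝ)) : Prop :=
  L.Nonempty ∧ L ⊆ latticePts Δ ∧ ¬ vertexSet cplx ⊆ L ∧
    ∀ P ∈ cplx, P ∩ L = ∅ ∨ μ P + 1 ≤ ((P ∩ L).ncard : ℤ)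

/-- `μ` is rigid if no `L` is deformable. -/
def Rigid {n : ℕ} (Δ : Set (Fin n → ℝ)) (cplx : Finset (Set (Fin n → ℝ)))
    (μ : Set (Fin n → ℝ) → ℤ) : Prop :=
  ¬ ∃ L, Deformable Δ cplx μ L

/-- `used(L) = Σ_{P : |P ∩ L| ≥ μ(P) + 1} μ(P)`. -/
noncomputable def usedWeight {n : ℕ} (cplx : Finset (Set (Fin n → ℝ))) (μ : Set (Fin n → ℝ) → ℤ)
    (L : Set (Fin n → ℝ)) : ℤ :=
  ∑ P ∈ cplx, if μ P + 1 ≤ ((P ∩ L).ncard : ℤ) then μ P else 0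

/-!
Take a largest set `M ⊇ L` of lattice points of `Δ` with `|M| ≤ used(M)`; it exists because
`L(Δ)` is finite, and it is deformable. If `M` contained every vertex it would be all of `L(Δ)`,
since in a lattice simplicial decomposition every lattice point is a vertex; but then
`used(M) ≤ |μ| = |Δ| - 1 < |M|`. If some cell `P` met `M` in at least one but at most `μ(P)`
points, completing `P ∩ M` to `μ(P) + 1` lattice points of `P` would add at most `μ(P)` points
to `M` while raising `used` by `μ(P)`, contradicting the maximality of `M`.
-/

lemma Set.Finite.finrank_vectorSpan_add_one_le_ncard {k V : Type*} [DivisionRing k]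
    [AddCommGroup V] [Module k V] {E : Set V} (hE : E.Finite) (hne : E.Nonempty) :
    Module.finrank k (vectorSpan k E) + 1 ≤ E.ncard := by
  have := hE.fintype
  have := hne.to_subtype
  rw [← Nat.card_coe_set_eq, Nat.card_eq_fintype_card]
  have h := finrank_vectorSpan_range_add_one_le k (Subtype.val : E → V)
  rwa [Subtype.range_coe_subtype, Set.ofPred_mem_eq] at h

namespace IsLatticePolytope

variable {n : ℕ} {P : Set (Fin n → ℝ)}

lemma isCompact (hP : IsLatticePolytope P) : IsCompact P := by
  obtain ⟨S, -, rfl⟩ := hP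
  exact S.finite_toSet.isCompact_convexHull (𝕜 := ℝ)

lemma convex (hP : IsLatticePolytope P) : Convex ℝ P := by
  obtain ⟨S, -, rfl⟩ := hP
  exact convex_convexHull ℝ _

lemma finite_latticePts (hP : IsLatticePolytope P) : (latticePts P).Finite := by
  refine (ZSpan.setFinite_inter (Pi.basisFun ℝ (Fin n)) hP.isCompact.isBounded).subset ?_
  rintro x ⟨hxP, hx⟩
  refine ⟨hxP, ((Pi.basisFun ℝ (Fin n)).mem_span_iff_repr_mem ℤ x).mpr fun i => ?_⟩
  obtain ⟨z, hz⟩ := hx i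
  exact ⟨z, by simp [hz]⟩

lemma extremePoints_subset_latticePts (hP : IsLatticePolytope P) :
    P.extremePoints ℝ ⊆ latticePts P := by
  obtain ⟨S, hS, rfl⟩ := hP
  exact fun x hx => ⟨hx.1, hS x (extremePoints_convexHull_subset hx)⟩

lemma convexHull_extremePoints (hP : IsLatticePolytope P) :
    convexHull ℝ (P.extremePoints ℝ) = P := by
  have hfin := hP.finite_latticePts.subset hP.extremePoints_subset_latticePts
  simpa [(hfin.isCompact_convexHull (𝕜 := ℝ)).isClosed.closure_eq] using
    closure_convexHull_extremePoints hP.isCompact hP.convex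

lemma extremePoints_eq_latticePts (hP : IsLatticePolytope P)
    (hcard : (latticePts P).ncard = polyDim P + 1) : P.extremePoints ℝ = latticePts P := by
  have hfin := hP.finite_latticePts.subset hP.extremePoints_subset_latticePts
  have hspan : vectorSpan ℝ (P.extremePoints ℝ) = vectorSpan ℝ P := by
    conv_rhs => rw [← hP.convexHull_extremePoints]
    rw [← direction_affineSpan, ← direction_affineSpan, affineSpan_convexHull]
  have hne : (P.extremePoints ℝ).Nonempty := by
    rw [← convexHull_nonempty_iff (𝕜 := ℝ), hP.convexHull_extremePoints]
    exact (Set.nonempty_of_ncard_ne_zero (hcard.trans_ne (Nat.succ_ne_zero _))).mono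
      (Set.sep_subset _ _)
  refine Set.eq_of_subset_of_ncard_le hP.extremePoints_subset_latticePts ?_ hP.finite_latticePts
  have := hfin.finrank_vectorSpan_add_one_le_ncard (k := ℝ) hne
  rw [hspan] at this
  exact hcard.trans_le this

end IsLatticePolytope

section Decomposition

variable {n : ℕ} {Δ P M M' : Set (Fin n → ℝ)} {cplx : Finset (Set (Fin n → ℝ))}
  {μ : Set (Fin n → ℝ) → ℤ}

lemma IsLatticeDecomp.subset_of_mem (hdec : IsLatticeDecomp Δ cplx) (hP : P ∈ cplx) : P ⊆ Δ :=
  hdec.2.2.2.2 ▸ Set.subset_sUnion_of_mem hP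

lemma IsLatticeDecomp.latticePts_subset_vertexSet (hdec : IsLatticeDecomp Δ cplx)
    (hsimp : LatticeSimplicial cplx) : latticePts Δ ⊆ vertexSet cplx := by
  obtain ⟨-, hpoly, hface, -, hcup⟩ := hdec
  rintro x ⟨hxΔ, hx⟩
  obtain ⟨P, hP, hxP⟩ := hcup ▸ hxΔ
  have hext : x ∈ P.extremePoints ℝ := by
    rw [(hpoly P hP).extremePoints_eq_latticePts (hsimp P hP)]
    exact ⟨hxP, hx⟩
  exact hface P hP {x} (isExtreme_singleton.mpr hext) (Set.singleton_nonempty x)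

lemma usedWeight_le_sum (hμ : ∀ P ∈ cplx, 0 ≤ μ P) (M : Set (Fin n → ℝ)) :
    usedWeight cplx μ M ≤ ∑ P ∈ cplx, μ P :=
  Finset.sum_le_sum fun P hP => by split_ifs <;> simp [hμ P hP]

lemma usedWeight_add_le (hμ : ∀ P ∈ cplx, 0 ≤ μ P) (hP : P ∈ cplx) (hMM' : M ⊆ M')
    (hM' : M'.Finite) (hM : ((P ∩ M).ncard : ℤ) < μ P + 1)
    (hPM' : μ P + 1 ≤ ((P ∩ M').ncard : ℤ)) :
    usedWeight cplx μ M + μ P ≤ usedWeight cplx μ M' := by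
  unfold usedWeight
  rw [← Finset.sum_erase_add _ _ hP, ← Finset.sum_erase_add _ _ hP, if_neg (by omega),
    if_pos hPM', add_zero]
  refine add_le_add_left (Finset.sum_le_sum fun Q hQ => ?_) _
  have hmono : (Q ∩ M).ncard ≤ (Q ∩ M').ncard :=
    Set.ncard_le_ncard (Set.inter_subset_inter_right Q hMM') (hM'.subset Set.inter_subset_right)
  have := hμ Q (Finset.mem_of_mem_erase hQ)
  split_ifs <;> omega

lemma not_vertexSet_subset_of_ncard_le_usedWeight (hdec : IsLatticeDecomp Δ cplx)
    (hsimp : LatticeSimplicial cplx) (hw : IsWeighting cplx μ)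
    (hsum : ∑ P ∈ cplx, μ P = ((latticePts Δ).ncard : ℤ) - 1) (hMΔ : M ⊆ latticePts Δ)
    (hM : (M.ncard : ℤ) ≤ usedWeight cplx μ M) : ¬ vertexSet cplx ⊆ M := by
  intro hv
  have hMeq : M = latticePts Δ := hMΔ.antisymm ((hdec.latticePts_subset_vertexSet hsimp).trans hv)
  have := usedWeight_le_sum (fun P hP => (hw P hP).1) M
  rw [hMeq] at hM this
  omega

lemma exists_ncard_lt_of_ncard_inter_lt (hfin : (latticePts Δ).Finite) (hw : IsWeighting cplx μ)
    (hP : P ∈ cplx) (hPΔ : P ⊆ Δ) (hMΔ : M ⊆ latticePts Δ)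
    (hM : (M.ncard : ℤ) ≤ usedWeight cplx μ M) (hne : (P ∩ M).Nonempty)
    (hsmall : ((P ∩ M).ncard : ℤ) < μ P + 1) :
    ∃ M', M ⊆ M' ∧ M' ⊆ latticePts Δ ∧ M.ncard < M'.ncard ∧
      (M'.ncard : ℤ) ≤ usedWeight cplx μ M' := by
  have hlatP : latticePts P ⊆ latticePts Δ := fun x hx => ⟨hPΔ hx.1, hx.2⟩
  have hPM : P ∩ M ⊆ latticePts P := fun x hx => ⟨hx.1, (hMΔ hx.2).2⟩
  have hMfin := hfin.subset hMΔ
  have hPMpos := (Set.ncard_pos (hMfin.subset Set.inter_subset_right)).mpr hne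
  obtain ⟨m, hm⟩ := Int.eq_ofNat_of_zero_le (hw P hP).1
  have hmP := (hw P hP).2
  obtain ⟨T, hPMT, hTP, hTcard⟩ :=
    Set.exists_subsuperset_card_eq hPM (n := m + 1) (by omega) (by omega)
  have hTfin := (hfin.subset hlatP).subset hTP
  have hTM : ¬ T ⊆ M := fun hTM => by
    have := Set.ncard_le_ncard (Set.subset_inter (fun x hx => (hTP hx).1) hTM)
      (hMfin.subset Set.inter_subset_right)
    omega
  have hunion : (M ∪ T).ncard + (P ∩ M).ncard ≤ M.ncard + T.ncard := by
    rw [← Set.ncard_union_add_ncard_inter M T hMfin hTfin]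
    exact Nat.add_le_add_left (Set.ncard_le_ncard (Set.subset_inter Set.inter_subset_right hPMT)
      (hMfin.subset Set.inter_subset_left)) _
  have hsat : T.ncard ≤ (P ∩ (M ∪ T)).ncard :=
    Set.ncard_le_ncard (Set.subset_inter (fun x hx => (hTP hx).1) Set.subset_union_right)
      ((hMfin.union hTfin).subset Set.inter_subset_right)
  have hused := usedWeight_add_le (fun Q hQ => (hw Q hQ).1) hP Set.subset_union_left
    (hMfin.union hTfin) hsmall (by omega)
  refine ⟨M ∪ T, Set.subset_union_left, Set.union_subset hMΔ (hTP.trans hlatP), ?_, by omega⟩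
  exact Set.ncard_lt_ncard (Set.ssubset_union_left_iff.mpr hTM) (hMfin.union hTfin)

end Decomposition

/-- For a lattice simplicial decomposition with `|μ| = |Δ| - 1`: if some nonempty set of
lattice points `L` satisfies `used(L) ≥ |L|`, then `μ` is not rigid. -/
theorem not_rigid_of_used_ge {n : ℕ} (Δ : Set (Fin n → ℝ)) (cplx : Finset (Set (Fin n → ℝ)))
    (μ : Set (Fin n → ℝ) → ℤ)
    (hΔ : IsLatticePolytope Δ) (hdec : IsLatticeDecomp Δ cplx)
    (hsimp : LatticeSimplicial cplx) (hw : IsWeighting cplx μ)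
    (hsum : ∑ P ∈ cplx, μ P = ((latticePts Δ).ncard : ℤ) - 1)
    (L : Set (Fin n → ℝ)) (hL : L.Nonempty) (hLsub : L ⊆ latticePts Δ)
    (hused : (L.ncard : ℤ) ≤ usedWeight cplx μ L) :
    ¬ Rigid Δ cplx μ := by
  intro hrigid
  have hfin := hΔ.finite_latticePts
  let good : Set (Set (Fin n → ℝ)) :=
    {M | L ⊆ M ∧ M ⊆ latticePts Δ ∧ (M.ncard : ℤ) ≤ usedWeight cplx μ M}
  have hgood : good.Finite := hfin.finite_subsets.subset fun M hM => hM.2.1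
  obtain ⟨M, ⟨hLM, hMΔ, hM⟩, hmax⟩ :=
    Set.exists_max_image good Set.ncard hgood ⟨L, subset_rfl, hLsub, hused⟩
  refine hrigid ⟨M, hL.mono hLM, hMΔ,
    not_vertexSet_subset_of_ncard_le_usedWeight hdec hsimp hw hsum hMΔ hM, fun P hP => ?_⟩
  refine or_iff_not_imp_left.mpr fun hne => not_lt.mp fun hsmall => ?_
  obtain ⟨M', hMM', hM'Δ, hlt, hM'⟩ := exists_ncard_lt_of_ncard_inter_lt hfin hw hP
    (hdec.subset_of_mem hP) hMΔ hM (Set.nonempty_iff_ne_empty.mpr hne) hsmall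
  exact (hmax M' ⟨hLM.trans hMM', hM'Δ, hM'⟩).not_gt hlt
end
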